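/- Seriality is not preserved under product update: there exist a serial, transitive, Euclidean Kripke model M (an observational epistemic model) and an action model A (with Euclidean, transitive, serial accessibility relations and precondition/postcondition functions) such that the product model M ⊗ A, restricted to pairs (w,e) with M,w ⊨ pre(e), fails to be serial. -/

import Mathlib

/-- Atomic symbols: propositional atoms and observation atoms obs_a p (sign true)
    or obs_a ¬p (sign false). -/
inductive Atm (P A : Type) : Type
  | prop : P → Atm P A
  | obs  : A → P → Bool → Atm P A
deriving DecidableEq

/-- Static formulas of the language OL. -/
inductive Form (P A : Type) : Type
  | atom : Atm P A → Form P A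
  | neg  : Form P A → Form P A
  | and  : Form P A → Form P A → Form P A
  | bel  : A → Form P A → Form P A
deriving DecidableEq

def Form.imp {P A : Type} (φ ψ : Form P A) : Form P A := .neg (.and φ (.neg ψ))

/-- Kripke model with agents A and atoms Atm P A. -/
structure KModel (W P A : Type) where
  R : A → W → W → Prop
  V : Atm P A → W → Prop

/-- Satisfaction relation. -/
def sat {W P A : Type} (M : KModel W P A) : W → Form P A → Prop
  | w, .atom q => M.V q w
  | w, .neg φ => ¬ sat M w φ
  | w, .and φ ψ => sat M w φ ∧ sat M w ψ
  | w, .bel a φ => ∀ v, M.R a w v → sat M v φ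

def Euclid {α : Type} (R : α → α → Prop) : Prop := ∀ x y z, R x y → R x z → R y z
def Trans' {α : Type} (R : α → α → Prop) : Prop := ∀ x y z, R x y → R y z → R x z
def Serial {α : Type} (R : α → α → Prop) : Prop := ∀ x, ∃ y, R x y

/-- Observational epistemic model: each relation is Euclidean, transitive and
    serial, and no world verifies both obs_a p and obs_a ¬p. -/
def ObsModel {W P A : Type} (M : KModel W P A) : Prop :=
  (∀ a, Euclid (M.R a) ∧ Trans' (M.R a) ∧ Serial (M.R a)) ∧
  (∀ a p w, M.V (.obs a p true) w → ¬ M.V (.obs a p false) w)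

/-- Action model with preconditions and postconditions. -/
structure ActModel (P A E : Type) where
  rel : A → E → E → Prop
  pre : E → Form P A
  post : E → Atm P A → Form P A

/-- Product update M ⊗ A: worlds are pairs (w,e) with M,w ⊨ pre(e). -/
def update {W P A E : Type} (M : KModel W P A) (Act : ActModel P A E) :
    KModel {x : W × E // sat M x.1 (Act.pre x.2)} P A where
  R a x y := M.R a x.1.1 y.1.1 ∧ Act.rel a x.1.2 y.1.2
  V q x := sat M x.1.1 (Act.post x.1.2 q)

/-- M,w ⊨ [A,e]φ : if pre(e) holds at w then φ holds at (w,e) in M ⊗ A. -/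
def dynBox {W P A E : Type} (M : KModel W P A) (Act : ActModel P A E)
    (w : W) (e : E) (φ : Form P A) : Prop :=
  ∀ h : sat M w (Act.pre e), sat (update M Act) ⟨(w, e), h⟩ φ

/-- M,w ⊨ ⟨A,e⟩φ : pre(e) holds at w and φ holds at (w,e) in M ⊗ A. -/
def dynDia {W P A E : Type} (M : KModel W P A) (Act : ActModel P A E)
    (w : W) (e : E) (φ : Form P A) : Prop :=
  ∃ h : sat M w (Act.pre e), sat (update M Act) ⟨(w, e), h⟩ φ

/-! At a world where `p` holds but the agent believes `¬p`, publicly announcing `p` deletes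
every world the agent considers possible, so the updated world has no successor. -/

section Relations

variable {α : Type}

theorem kd45_eq_const (c : α) :
    Euclid (fun _ y : α => y = c) ∧ Trans' (fun _ y : α => y = c) ∧ Serial (fun _ y : α => y = c) :=
  ⟨fun _ _ _ _ hz => hz, fun _ _ _ _ hz => hz, fun _ => ⟨c, rfl⟩⟩

theorem kd45_top : Euclid (fun _ _ : α => True) ∧ Trans' (fun _ _ : α => True) ∧
    Serial (fun _ _ : α => True) :=
  ⟨fun _ _ _ _ _ => trivial, fun _ _ _ _ _ => trivial, fun x => ⟨x, trivial⟩⟩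

end Relations

theorem not_serial_update_of_succ_not_pre {W P A E : Type} (M : KModel W P A)
    (Act : ActModel P A E) (a : A) (x : {x : W × E // sat M x.1 (Act.pre x.2)})
    (h : ∀ v f, M.R a x.1.1 v → Act.rel a x.1.2 f → ¬ sat M v (Act.pre f)) :
    ¬ Serial ((update M Act).R a) := by
  intro hser
  obtain ⟨y, hRM, hRAct⟩ := hser x
  exact h y.1.1 y.1.2 hRM hRAct y.2

def falseBeliefModel : KModel Bool Unit Unit where
  R _ _ v := v = false
  V q w := q = .prop () ∧ w = true

def publicAnnouncement : ActModel Unit Unit Unit where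
  rel _ _ _ := True
  pre _ := .atom (.prop ())
  post _ q := .atom q

theorem obsModel_falseBeliefModel : ObsModel falseBeliefModel :=
  ⟨fun _ => kd45_eq_const false, by rintro _ _ _ ⟨⟨⟩, -⟩⟩

theorem not_serial_update_falseBeliefModel :
    ¬ Serial ((update falseBeliefModel publicAnnouncement).R ()) := by
  refine not_serial_update_of_succ_not_pre _ _ () ⟨(true, ()), rfl, rfl⟩ ?_
  rintro v - rfl - ⟨-, ⟨⟩⟩

/-- seriality is not preserved under product update: there are an
    observational epistemic model M and an action model A (with Euclidean,
    transitive, serial relations) whose product fails to be serial. -/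
theorem stmt3 : ∃ (W P A E : Type) (M : KModel W P A) (Act : ActModel P A E),
    ObsModel M ∧
    (∀ a, Euclid (Act.rel a) ∧ Trans' (Act.rel a) ∧ Serial (Act.rel a)) ∧
    ∃ a : A, ¬ Serial ((update M Act).R a) :=
  ⟨Bool, Unit, Unit, Unit, falseBeliefModel, publicAnnouncement, obsModel_falseBeliefModel,
    fun _ => kd45_top, (), not_serial_update_falseBeliefModel⟩
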